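/- arXiv:1204.3922 — 3 statements merged into one kernel-verified Lean document; each statement's English description precedes it below -/
import Mathlib

section
/- Let ∇^I be the Levi-Civita connection on so(3) with respect to ⟨,⟩^I, and set H_i := E_i/√(I_i) for i = 1,2,3 (an orthonormal basis). Then for every v ∈ so(3) with v̂ = (v_1,v_2,v_3), Σ_{i=1}^3 (∇^I_{ad_v H_i} H_i + ∇^I_{H_i}(ad_v H_i)) = (1/(I_1I_2I_3)) ((I_2−I_3)² v_1 E_1 + (I_3−I_1)² v_2 E_2 + (I_1−I_2)² v_3 E_3). -/
open Matrix

noncomputable section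

/-- Basis element `E₁` of `so(3)`. -/
def E1 : Matrix (Fin 3) (Fin 3) ℝ := !![0,0,0; 0,0,-1; 0,1,0]

/-- Basis element `E₂` of `so(3)`. -/
def E2 : Matrix (Fin 3) (Fin 3) ℝ := !![0,0,1; 0,0,0; -1,0,0]

/-- Basis element `E₃` of `so(3)`. -/
def E3 : Matrix (Fin 3) (Fin 3) ℝ := !![0,-1,0; 1,0,0; 0,0,0]

/-- The element of `so(3)` with hat coordinates `a = (a₁,a₂,a₃)`. -/
def ofHat (a : Fin 3 → ℝ) : Matrix (Fin 3) (Fin 3) ℝ := a 0 • E1 + a 1 • E2 + a 2 • E3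

/-- Matrix commutator. -/
def bracket (X Y : Matrix (Fin 3) (Fin 3) ℝ) : Matrix (Fin 3) (Fin 3) ℝ := X * Y - Y * X

/-- Hat coordinates of a skew-symmetric matrix. -/
def hat (v : Matrix (Fin 3) (Fin 3) ℝ) : Fin 3 → ℝ := ![v 2 1, v 0 2, v 1 0]

/-- The weighted inner product `⟨v,w⟩^I = Σ_j I_j v_j w_j` on `so(3)` in hat coordinates. -/
def innerI (I : Fin 3 → ℝ) (v w : Matrix (Fin 3) (Fin 3) ℝ) : ℝ :=
  ∑ j, I j * hat v j * hat w j

/-- The orthonormal basis `H_i = E_i / √(I_i)` of `(so(3), ⟨,⟩^I)`. -/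
def Hb (I : Fin 3 → ℝ) (i : Fin 3) : Matrix (Fin 3) (Fin 3) ℝ :=
  (Real.sqrt (I i))⁻¹ • (![E1, E2, E3] i)

set_option maxHeartbeats 4000000

def cross (a b : Fin 3 → ℝ) : Fin 3 → ℝ :=
  ![a 1 * b 2 - a 2 * b 1, a 2 * b 0 - a 0 * b 2, a 0 * b 1 - a 1 * b 0]

lemma ofHat_eq (a : Fin 3 → ℝ) :
    ofHat a = !![0, -a 2, a 1; a 2, 0, -a 0; -a 1, a 0, 0] := by
  ext i j
  fin_cases i <;> fin_cases j <;>
    simp [ofHat, E1, E2, E3, Matrix.vecHead, Matrix.vecTail]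

lemma hat_ofHat (a : Fin 3 → ℝ) : hat (ofHat a) = a := by
  rw [ofHat_eq]; funext j; fin_cases j <;> simp [hat]

lemma bracket_ofHat (a b : Fin 3 → ℝ) :
    bracket (ofHat a) (ofHat b) = ofHat (cross a b) := by
  rw [ofHat_eq, ofHat_eq, ofHat_eq]
  ext i j
  fin_cases i <;> fin_cases j <;>
    · simp [bracket, cross, Matrix.mul_apply, Fin.sum_univ_three]
      ring

lemma innerI_ofHat (I a b : Fin 3 → ℝ) :
    innerI I (ofHat a) (ofHat b) = ∑ j, I j * a j * b j := by
  simp [innerI, hat_ofHat]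

def nabC (I a b : Fin 3 → ℝ) : Fin 3 → ℝ := fun j =>
  (2 * I j)⁻¹ * ((∑ k, I k * cross a b k * (Pi.single j 1 : Fin 3 → ℝ) k)
    - (∑ k, I k * cross b (Pi.single j 1 : Fin 3 → ℝ) k * a k)
    + (∑ k, I k * cross (Pi.single j 1 : Fin 3 → ℝ) a k * b k))

lemma sum_single (I f : Fin 3 → ℝ) (j : Fin 3) :
    ∑ k, I k * f k * (Pi.single j 1 : Fin 3 → ℝ) k = I j * f j := by
  fin_cases j <;> simp [Fin.sum_univ_three, Pi.single_apply]

lemma N_eq (I : Fin 3 → ℝ) (hI : ∀ j, 0 < I j)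
    (N : Matrix (Fin 3) (Fin 3) ℝ → Matrix (Fin 3) (Fin 3) ℝ → Matrix (Fin 3) (Fin 3) ℝ)
    (hrange : ∀ a b : Fin 3 → ℝ, ∃ d : Fin 3 → ℝ, N (ofHat a) (ofHat b) = ofHat d)
    (hKoszul : ∀ a b c : Fin 3 → ℝ,
      2 * innerI I (N (ofHat a) (ofHat b)) (ofHat c) =
        innerI I (bracket (ofHat a) (ofHat b)) (ofHat c)
          - innerI I (bracket (ofHat b) (ofHat c)) (ofHat a)
          + innerI I (bracket (ofHat c) (ofHat a)) (ofHat b))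
    (a b : Fin 3 → ℝ) : N (ofHat a) (ofHat b) = ofHat (nabC I a b) := by
  obtain ⟨d, hd⟩ := hrange a b
  rw [hd]
  suffices hdn : d = nabC I a b by rw [hdn]
  funext j
  have h := hKoszul a b (Pi.single j 1)
  rw [hd, bracket_ofHat, bracket_ofHat, bracket_ofHat, innerI_ofHat, innerI_ofHat,
    innerI_ofHat, innerI_ofHat, sum_single, sum_single] at h
  have hj := (hI j).ne'
  rw [nabC, sum_single I (cross a b) j]
  field_simp
  linarith [h]

lemma ofHat_smul (r : ℝ) (a : Fin 3 → ℝ) : ofHat (r • a) = r • ofHat a := by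
  simp [ofHat, smul_add, smul_smul, mul_comm]

lemma Hb_eq (I : Fin 3 → ℝ) (i : Fin 3) :
    Hb I i = ofHat (Pi.single i ((Real.sqrt (I i))⁻¹)) := by
  fin_cases i <;>
    simp [Hb, ofHat, Pi.single_apply, Matrix.vecHead, Matrix.vecTail]

lemma ofHat_add (a b : Fin 3 → ℝ) : ofHat (a + b) = ofHat a + ofHat b := by
  simp [ofHat, add_smul]; abel

lemma ofHat_triple (c1 c2 c3 : ℝ) :
    c1 • E1 + c2 • E2 + c3 • E3 = ofHat ![c1, c2, c3] := by
  simp [ofHat]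

/-- With `H_i = E_i/√(I_i)` orthonormal for `⟨,⟩^I` and `∇^I` the Levi-Civita connection,
`Σᵢ (∇^I_{ad_v H_i} H_i + ∇^I_{H_i}(ad_v H_i))
  = (1/(I₁I₂I₃)) ((I₂−I₃)² v₁ E₁ + (I₃−I₁)² v₂ E₂ + (I₁−I₂)² v₃ E₃)`,
where `ad_v w = [v,w]`. -/
theorem so3_K_sum_formula (I : Fin 3 → ℝ) (hI : ∀ j, 0 < I j)
    (N : Matrix (Fin 3) (Fin 3) ℝ → Matrix (Fin 3) (Fin 3) ℝ → Matrix (Fin 3) (Fin 3) ℝ)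
    (hrange : ∀ a b : Fin 3 → ℝ, ∃ d : Fin 3 → ℝ, N (ofHat a) (ofHat b) = ofHat d)
    (hKoszul : ∀ a b c : Fin 3 → ℝ,
      2 * innerI I (N (ofHat a) (ofHat b)) (ofHat c) =
        innerI I (bracket (ofHat a) (ofHat b)) (ofHat c)
          - innerI I (bracket (ofHat b) (ofHat c)) (ofHat a)
          + innerI I (bracket (ofHat c) (ofHat a)) (ofHat b)) :
    ∀ v : Fin 3 → ℝ,
      ∑ i : Fin 3, (N (bracket (ofHat v) (Hb I i)) (Hb I i)
          + N (Hb I i) (bracket (ofHat v) (Hb I i))) =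
        (1 / (I 0 * I 1 * I 2)) •
          (((I 1 - I 2) ^ 2 * v 0) • E1 + ((I 2 - I 0) ^ 2 * v 1) • E2 +
            ((I 0 - I 1) ^ 2 * v 2) • E3) := by
  intro v
  have hNe := N_eq I hI N hrange hKoszul
  have hterm : ∀ i : Fin 3, N (bracket (ofHat v) (Hb I i)) (Hb I i)
        + N (Hb I i) (bracket (ofHat v) (Hb I i))
      = ofHat (nabC I (cross v (Pi.single i ((Real.sqrt (I i))⁻¹)))
            (Pi.single i ((Real.sqrt (I i))⁻¹))
          + nabC I (Pi.single i ((Real.sqrt (I i))⁻¹))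
            (cross v (Pi.single i ((Real.sqrt (I i))⁻¹)))) := by
    intro i
    rw [Hb_eq, bracket_ofHat, hNe, hNe, ofHat_add]
  rw [Fin.sum_univ_three, hterm 0, hterm 1, hterm 2, ← ofHat_add, ← ofHat_add,
    ofHat_triple, ← ofHat_smul]
  refine congrArg ofHat ?_
  have h0 := Real.mul_self_sqrt (hI 0).le
  have h1 := Real.mul_self_sqrt (hI 1).le
  have h2 := Real.mul_self_sqrt (hI 2).le
  have n0 : Real.sqrt (I 0) ≠ 0 := ne_of_gt (Real.sqrt_pos.mpr (hI 0))
  have n1 : Real.sqrt (I 1) ≠ 0 := ne_of_gt (Real.sqrt_pos.mpr (hI 1))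
  have n2 : Real.sqrt (I 2) ≠ 0 := ne_of_gt (Real.sqrt_pos.mpr (hI 2))
  set s0 := Real.sqrt (I 0) with hs0
  set s1 := Real.sqrt (I 1) with hs1
  set s2 := Real.sqrt (I 2) with hs2
  funext j
  fin_cases j <;>
    · simp only [nabC, cross, Pi.single_apply, Fin.sum_univ_three, Pi.add_apply,
        Pi.smul_apply, smul_eq_mul, Matrix.cons_val_zero, Matrix.cons_val_one,
        Matrix.head_cons, Matrix.cons_val_two, Matrix.tail_cons, Matrix.vecHead,
        Matrix.vecTail, Fin.isValue, Fin.reduceFinMk, Fin.reduceEq, reduceIte, if_true, if_false]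
      norm_num
      rw [← h0, ← h1, ← h2]
      field_simp
      ring
end
end

section
/- Let m ≥ 1 and let S ⊂ ℤ² be a set of representatives of the nonzero equivalence classes {k, −k} with |k| ≤ m. Suppose λ(|k|) = λ(|k'|) whenever |k| = |k'|. Then for every f ∈ C²(𝕋²), Σ_{k ∈ S, |k| ≤ m} (A_k A_k f + B_k B_k f) = ν Δf, where X f denotes the derivative of f along the vector field X, applied twice, Δ is the Laplacian on 𝕋², and ν = ½ Σ_{k ∈ S, |k| ≤ m} λ(|k|)² |k|_2², with |k|_2² = k_1² + k_2². -/
noncomputable section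

/-- Partial derivative in the first variable. -/
def p1 (f : ℝ → ℝ → ℝ) (x y : ℝ) : ℝ := deriv (fun s => f s y) x

/-- Partial derivative in the second variable. -/
def p2 (f : ℝ → ℝ → ℝ) (x y : ℝ) : ℝ := deriv (fun s => f x s) y

/-- First component of the vector field `A_k = λ(|k|)(k₂cos(k·θ), −k₁cos(k·θ))` on `𝕋²`. -/
def A1 (k : ℤ × ℤ) (lam : ℝ) (x y : ℝ) : ℝ :=
  lam * ((k.2 : ℝ) * Real.cos ((k.1 : ℝ) * x + (k.2 : ℝ) * y))

/-- Second component of `A_k`. -/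
def A2 (k : ℤ × ℤ) (lam : ℝ) (x y : ℝ) : ℝ :=
  lam * (-(k.1 : ℝ) * Real.cos ((k.1 : ℝ) * x + (k.2 : ℝ) * y))

/-- First component of the vector field `B_k = λ(|k|)(k₂sin(k·θ), −k₁sin(k·θ))` on `𝕋²`. -/
def B1 (k : ℤ × ℤ) (lam : ℝ) (x y : ℝ) : ℝ :=
  lam * ((k.2 : ℝ) * Real.sin ((k.1 : ℝ) * x + (k.2 : ℝ) * y))

/-- Second component of `B_k`. -/
def B2 (k : ℤ × ℤ) (lam : ℝ) (x y : ℝ) : ℝ :=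
  lam * (-(k.1 : ℝ) * Real.sin ((k.1 : ℝ) * x + (k.2 : ℝ) * y))

/-- Derivative of a function along the vector field `A_k`: `(A_k f)(θ) = A_k¹∂₁f + A_k²∂₂f`. -/
def Aop (k : ℤ × ℤ) (lam : ℝ) (f : ℝ → ℝ → ℝ) (x y : ℝ) : ℝ :=
  A1 k lam x y * p1 f x y + A2 k lam x y * p2 f x y

/-- Derivative of a function along the vector field `B_k`. -/
def Bop (k : ℤ × ℤ) (lam : ℝ) (f : ℝ → ℝ → ℝ) (x y : ℝ) : ℝ :=
  B1 k lam x y * p1 f x y + B2 k lam x y * p2 f x y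

/-!
Both `A_k` and `B_k` point along `k⊥ = (k₂, -k₁)`, and their coefficients `λ cos (k·θ)`,
`λ sin (k·θ)` are constant along `k⊥`. Hence `A_kA_k f + B_kB_k f = λ² (cos² + sin²) ∂²_{k⊥} f
= λ² ∂²_{k⊥} f`. This summand is even in `k`, so its sum over `S` is half its sum over the full
set `{k ≠ 0, |k| ≤ m} = S ∪ -S`, which is invariant under the quarter turn `k ↦ k⊥`. Averaging
over that rotation cancels the mixed derivatives and turns `k₂² ∂₁² + k₁² ∂₂²` into
`½ (k₁² + k₂²) Δ`.
-/

open Finset Pointwise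

def dirDeriv (v : ℝ × ℝ) (f : ℝ → ℝ → ℝ) (x y : ℝ) : ℝ :=
  v.1 * p1 f x y + v.2 * p2 f x y

section Calculus

variable {f u : ℝ → ℝ → ℝ} {x y : ℝ}

lemma p1_eq_fderiv (hf : DifferentiableAt ℝ (fun p : ℝ × ℝ => f p.1 p.2) (x, y)) :
    p1 f x y = fderiv ℝ (fun p : ℝ × ℝ => f p.1 p.2) (x, y) (1, 0) :=
  (hf.hasFDerivAt.comp_hasDerivAt (f := fun s => (s, y)) x
    ((hasDerivAt_id' x).prodMk (hasDerivAt_const x y))).deriv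

lemma p2_eq_fderiv (hf : DifferentiableAt ℝ (fun p : ℝ × ℝ => f p.1 p.2) (x, y)) :
    p2 f x y = fderiv ℝ (fun p : ℝ × ℝ => f p.1 p.2) (x, y) (0, 1) :=
  (hf.hasFDerivAt.comp_hasDerivAt (f := fun s => (x, s)) y
    ((hasDerivAt_const y x).prodMk (hasDerivAt_id' y))).deriv

lemma dirDeriv_eq_fderiv (v : ℝ × ℝ)
    (hf : DifferentiableAt ℝ (fun p : ℝ × ℝ => f p.1 p.2) (x, y)) :
    dirDeriv v f x y = fderiv ℝ (fun p : ℝ × ℝ => f p.1 p.2) (x, y) v := by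
  have hv : v = v.1 • ((1 : ℝ), (0 : ℝ)) + v.2 • ((0 : ℝ), (1 : ℝ)) := by ext <;> simp
  rw [dirDeriv, p1_eq_fderiv hf, p2_eq_fderiv hf]
  conv_rhs => rw [hv]
  simp only [map_add, map_smul, smul_eq_mul]

lemma dirDeriv_eq_deriv_line (v : ℝ × ℝ)
    (hf : DifferentiableAt ℝ (fun p : ℝ × ℝ => f p.1 p.2) (x, y)) :
    dirDeriv v f x y = deriv (fun t => f (x + t * v.1) (y + t * v.2)) 0 := by
  have hline : HasDerivAt (fun t : ℝ => (x + t * v.1, y + t * v.2)) v 0 := by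
    simpa using (((hasDerivAt_id (0 : ℝ)).mul_const v.1).const_add x).prodMk
      (((hasDerivAt_id (0 : ℝ)).mul_const v.2).const_add y)
  rw [dirDeriv_eq_fderiv v hf]
  exact (hf.hasFDerivAt.comp_hasDerivAt_of_eq 0 hline (by simp)).deriv.symm

lemma contDiff_p1 {m n : WithTop ℕ∞} (hf : ContDiff ℝ n (fun p : ℝ × ℝ => f p.1 p.2))
    (hmn : m + 1 ≤ n) : ContDiff ℝ m (fun p : ℝ × ℝ => p1 f p.1 p.2) := by
  have hd := hf.differentiable (by rintro rfl; simp at hmn)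
  simpa only [p1_eq_fderiv (hd _)] using (hf.fderiv_right hmn).clm_apply contDiff_const

lemma contDiff_p2 {m n : WithTop ℕ∞} (hf : ContDiff ℝ n (fun p : ℝ × ℝ => f p.1 p.2))
    (hmn : m + 1 ≤ n) : ContDiff ℝ m (fun p : ℝ × ℝ => p2 f p.1 p.2) := by
  have hd := hf.differentiable (by rintro rfl; simp at hmn)
  simpa only [p2_eq_fderiv (hd _)] using (hf.fderiv_right hmn).clm_apply contDiff_const

lemma contDiff_dirDeriv {m n : WithTop ℕ∞} (v : ℝ × ℝ)
    (hf : ContDiff ℝ n (fun p : ℝ × ℝ => f p.1 p.2)) (hmn : m + 1 ≤ n) :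
    ContDiff ℝ m (fun p : ℝ × ℝ => dirDeriv v f p.1 p.2) :=
  (contDiff_const.mul (contDiff_p1 hf hmn)).add (contDiff_const.mul (contDiff_p2 hf hmn))

-- `c₁x + c₂y` is constant along `v`, so `g (c₁x + c₂y)` behaves as a constant factor.
lemma dirDeriv_comp_linear_mul {g : ℝ → ℝ} (hg : Differentiable ℝ g) {v c : ℝ × ℝ}
    (hcv : c.1 * v.1 + c.2 * v.2 = 0)
    (hu : DifferentiableAt ℝ (fun p : ℝ × ℝ => u p.1 p.2) (x, y)) :
    dirDeriv v (fun x y => g (c.1 * x + c.2 * y) * u x y) x y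
      = g (c.1 * x + c.2 * y) * dirDeriv v u x y := by
  have hgu : DifferentiableAt ℝ
      (fun p : ℝ × ℝ => g (c.1 * p.1 + c.2 * p.2) * u p.1 p.2) (x, y) := by
    fun_prop
  have hconst : ∀ t : ℝ, c.1 * (x + t * v.1) + c.2 * (y + t * v.2) = c.1 * x + c.2 * y := by
    intro t; linear_combination t * hcv
  rw [dirDeriv_eq_deriv_line v hgu, dirDeriv_eq_deriv_line v hu]
  simp only [hconst, deriv_const_mul_field]

lemma p1_dirDeriv (v : ℝ × ℝ)
    (h1 : DifferentiableAt ℝ (fun p : ℝ × ℝ => p1 f p.1 p.2) (x, y))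
    (h2 : DifferentiableAt ℝ (fun p : ℝ × ℝ => p2 f p.1 p.2) (x, y)) :
    p1 (dirDeriv v f) x y = v.1 * p1 (p1 f) x y + v.2 * p1 (p2 f) x y := by
  have h1' : DifferentiableAt ℝ (fun s => p1 f s y) x := by fun_prop
  have h2' : DifferentiableAt ℝ (fun s => p2 f s y) x := by fun_prop
  change deriv (fun s => v.1 * p1 f s y + v.2 * p2 f s y) x = _
  rw [deriv_fun_add (h1'.const_mul _) (h2'.const_mul _), deriv_const_mul_field,
    deriv_const_mul_field]
  rfl

lemma p2_dirDeriv (v : ℝ × ℝ)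
    (h1 : DifferentiableAt ℝ (fun p : ℝ × ℝ => p1 f p.1 p.2) (x, y))
    (h2 : DifferentiableAt ℝ (fun p : ℝ × ℝ => p2 f p.1 p.2) (x, y)) :
    p2 (dirDeriv v f) x y = v.1 * p2 (p1 f) x y + v.2 * p2 (p2 f) x y := by
  have h1' : DifferentiableAt ℝ (fun s => p1 f x s) y := by fun_prop
  have h2' : DifferentiableAt ℝ (fun s => p2 f x s) y := by fun_prop
  change deriv (fun s => v.1 * p1 f x s + v.2 * p2 f x s) y = _
  rw [deriv_fun_add (h1'.const_mul _) (h2'.const_mul _), deriv_const_mul_field,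
    deriv_const_mul_field]
  rfl

lemma dirDeriv_dirDeriv (v : ℝ × ℝ) (hf : ContDiff ℝ 2 (fun p : ℝ × ℝ => f p.1 p.2)) :
    dirDeriv v (dirDeriv v f) x y
      = v.1 ^ 2 * p1 (p1 f) x y + v.1 * v.2 * (p1 (p2 f) x y + p2 (p1 f) x y)
        + v.2 ^ 2 * p2 (p2 f) x y := by
  have h1 := (contDiff_p1 hf le_rfl).differentiable one_ne_zero (x, y)
  have h2 := (contDiff_p2 hf le_rfl).differentiable one_ne_zero (x, y)
  rw [dirDeriv, p1_dirDeriv v h1 h2, p2_dirDeriv v h1 h2]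
  ring

end Calculus

def kPerp (k : ℤ × ℤ) : ℝ × ℝ := ((k.2 : ℝ), -(k.1 : ℝ))

lemma Aop_eq (k : ℤ × ℤ) (lam : ℝ) (f : ℝ → ℝ → ℝ) :
    Aop k lam f = fun x y =>
      lam * Real.cos ((k.1 : ℝ) * x + (k.2 : ℝ) * y) * dirDeriv (kPerp k) f x y := by
  funext x y
  simp only [Aop, A1, A2, dirDeriv, kPerp]
  ring

lemma Bop_eq (k : ℤ × ℤ) (lam : ℝ) (f : ℝ → ℝ → ℝ) :
    Bop k lam f = fun x y =>
      lam * Real.sin ((k.1 : ℝ) * x + (k.2 : ℝ) * y) * dirDeriv (kPerp k) f x y := by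
  funext x y
  simp only [Bop, B1, B2, dirDeriv, kPerp]
  ring

lemma Aop_Aop_add_Bop_Bop (k : ℤ × ℤ) (lam : ℝ) {f : ℝ → ℝ → ℝ}
    (hf : ContDiff ℝ 2 (fun p : ℝ × ℝ => f p.1 p.2)) (x y : ℝ) :
    Aop k lam (Aop k lam f) x y + Bop k lam (Bop k lam f) x y
      = lam ^ 2 * dirDeriv (kPerp k) (dirDeriv (kPerp k) f) x y := by
  have hu := (contDiff_dirDeriv (kPerp k) hf le_rfl).differentiable one_ne_zero (x, y)
  have hperp : (k.1 : ℝ) * (kPerp k).1 + (k.2 : ℝ) * (kPerp k).2 = 0 := by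
    simp only [kPerp]; ring
  have hA := dirDeriv_comp_linear_mul (g := fun t => lam * Real.cos t)
    (c := ((k.1 : ℝ), (k.2 : ℝ))) (by fun_prop) hperp hu
  have hB := dirDeriv_comp_linear_mul (g := fun t => lam * Real.sin t)
    (c := ((k.1 : ℝ), (k.2 : ℝ))) (by fun_prop) hperp hu
  simp only at hA hB
  rw [Aop_eq, Aop_eq, Bop_eq, Bop_eq]
  simp only
  rw [hA, hB]
  linear_combination lam ^ 2 * dirDeriv (kPerp k) (dirDeriv (kPerp k) f) x y *
    Real.cos_sq_add_sin_sq ((k.1 : ℝ) * x + (k.2 : ℝ) * y)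

section Symmetrization

variable {G R : Type*} [InvolutiveNeg G] [DecidableEq G] [AddCommMonoid R] {S : Finset G}
  {w : G → R}

lemma sum_union_neg_of_even (hS : Disjoint S (-S)) (hw : ∀ k, w (-k) = w k) :
    ∑ k ∈ S ∪ -S, w k = 2 • ∑ k ∈ S, w k := by
  rw [sum_union hS, sum_neg_index, two_nsmul]
  simp only [hw]

lemma sum_comp_eq_sum_of_disjoint_neg [IsAddTorsionFree R] (ρ : G ≃ G)
    (hρneg : ∀ k, ρ (-k) = -ρ k) (hρ : ∀ k, k ∈ S ∪ -S ↔ ρ k ∈ S ∪ -S)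
    (hS : Disjoint S (-S)) (hw : ∀ k, w (-k) = w k) :
    ∑ k ∈ S, w (ρ k) = ∑ k ∈ S, w k := by
  apply IsAddTorsionFree.nsmul_right_injective two_ne_zero
  simp only
  rw [← sum_union_neg_of_even hS hw, ← sum_union_neg_of_even hS (fun k => by rw [hρneg, hw])]
  exact sum_equiv ρ hρ (fun _ _ => rfl)

end Symmetrization

def quarterTurn : ℤ × ℤ ≃ ℤ × ℤ where
  toFun k := (k.2, -k.1)
  invFun k := (-k.2, k.1)
  left_inv k := by simp
  right_inv k := by simp

section Representatives

variable {m : ℕ} {S : Finset (ℤ × ℤ)}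

lemma disjoint_neg_of_rep
    (hrep : ∀ k : ℤ × ℤ, k ≠ 0 → k.1.natAbs + k.2.natAbs ≤ m → (k ∈ S ↔ ¬ (-k ∈ S)))
    (hmem : ∀ k ∈ S, k ≠ (0 : ℤ × ℤ) ∧ k.1.natAbs + k.2.natAbs ≤ m) :
    Disjoint S (-S) := by
  rw [disjoint_left]
  intro k hk hk'
  exact (hrep k (hmem k hk).1 (hmem k hk).2).mp hk (mem_neg'.mp hk')

lemma mem_union_neg_iff_of_rep
    (hrep : ∀ k : ℤ × ℤ, k ≠ 0 → k.1.natAbs + k.2.natAbs ≤ m → (k ∈ S ↔ ¬ (-k ∈ S)))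
    (hmem : ∀ k ∈ S, k ≠ (0 : ℤ × ℤ) ∧ k.1.natAbs + k.2.natAbs ≤ m) (k : ℤ × ℤ) :
    k ∈ S ∪ -S ↔ k ≠ 0 ∧ k.1.natAbs + k.2.natAbs ≤ m := by
  rw [mem_union, mem_neg']
  constructor
  · rintro (hk | hk)
    · exact hmem k hk
    · simpa using hmem (-k) hk
  · rintro ⟨h0, hle⟩
    have := hrep k h0 hle
    tauto

lemma sum_comp_quarterTurn_of_rep
    (hrep : ∀ k : ℤ × ℤ, k ≠ 0 → k.1.natAbs + k.2.natAbs ≤ m → (k ∈ S ↔ ¬ (-k ∈ S)))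
    (hmem : ∀ k ∈ S, k ≠ (0 : ℤ × ℤ) ∧ k.1.natAbs + k.2.natAbs ≤ m)
    {w : ℤ × ℤ → ℝ} (hw : ∀ k, w (-k) = w k) :
    ∑ k ∈ S, w (quarterTurn k) = ∑ k ∈ S, w k := by
  refine sum_comp_eq_sum_of_disjoint_neg quarterTurn (fun k => rfl) (fun k => ?_)
    (disjoint_neg_of_rep hrep hmem) hw
  rw [mem_union_neg_iff_of_rep hrep hmem, mem_union_neg_iff_of_rep hrep hmem]
  obtain ⟨a, b⟩ := k
  simp [quarterTurn, add_comm, and_comm]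

end Representatives

theorem sum_AkAk_BkBk_eq_laplacian_general (m : ℕ) (lam : ℕ → ℝ)
    (S : Finset (ℤ × ℤ))
    (hrep : ∀ k : ℤ × ℤ, k ≠ 0 → k.1.natAbs + k.2.natAbs ≤ m → (k ∈ S ↔ ¬ (-k ∈ S)))
    (hmem : ∀ k ∈ S, k ≠ (0 : ℤ × ℤ) ∧ k.1.natAbs + k.2.natAbs ≤ m)
    (f : ℝ → ℝ → ℝ) (hf : ContDiff ℝ 2 (fun p : ℝ × ℝ => f p.1 p.2)) (x y : ℝ) :
    ∑ k ∈ S, (Aop k (lam (k.1.natAbs + k.2.natAbs))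
          (Aop k (lam (k.1.natAbs + k.2.natAbs)) f) x y
        + Bop k (lam (k.1.natAbs + k.2.natAbs))
          (Bop k (lam (k.1.natAbs + k.2.natAbs)) f) x y) =
      ((1 : ℝ)/2 * ∑ k ∈ S, (lam (k.1.natAbs + k.2.natAbs)) ^ 2 * ((k.1 : ℝ) ^ 2 + (k.2 : ℝ) ^ 2))
        * (p1 (p1 f) x y + p2 (p2 f) x y) := by
  set w : ℤ × ℤ → ℝ := fun k =>
    lam (k.1.natAbs + k.2.natAbs) ^ 2 * dirDeriv (kPerp k) (dirDeriv (kPerp k) f) x y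
  have hw : ∀ k, w k = lam (k.1.natAbs + k.2.natAbs) ^ 2 * ((k.2 : ℝ) ^ 2 * p1 (p1 f) x y
      - k.1 * k.2 * (p1 (p2 f) x y + p2 (p1 f) x y) + (k.1 : ℝ) ^ 2 * p2 (p2 f) x y) := by
    intro k
    simp only [w, dirDeriv_dirDeriv _ hf, kPerp]
    ring
  have hw_even : ∀ k, w (-k) = w k := by
    intro k
    simp only [hw, Prod.fst_neg, Prod.snd_neg, Int.natAbs_neg, Int.cast_neg]
    ring
  -- the cross terms cancel between `k` and its quarter turn, the diagonal ones add up to `Δ`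
  have hw_add_rotate : ∀ k, w k + w (quarterTurn k) = lam (k.1.natAbs + k.2.natAbs) ^ 2 *
      ((k.1 : ℝ) ^ 2 + (k.2 : ℝ) ^ 2) * (p1 (p1 f) x y + p2 (p2 f) x y) := by
    intro k
    simp only [hw, quarterTurn, Equiv.coe_fn_mk, Int.natAbs_neg, Int.cast_neg,
      add_comm k.2.natAbs]
    ring
  calc _ = ∑ k ∈ S, w k := sum_congr rfl fun k _ => Aop_Aop_add_Bop_Bop k _ hf x y
    _ = 1 / 2 * ∑ k ∈ S, (w k + w (quarterTurn k)) := by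
      rw [sum_add_distrib, sum_comp_quarterTurn_of_rep hrep hmem hw_even]
      ring
    _ = _ := by rw [sum_congr rfl fun k _ => hw_add_rotate k, ← sum_mul, mul_assoc]

/-- If `S` contains exactly one representative of each equivalence class `{k,−k}` of nonzero
`k ∈ ℤ²` with `|k| = |k₁|+|k₂| ≤ m`, and `λ` depends only on `|k|`, then for every `f ∈ C²(𝕋²)`,
`Σ_{k∈S} (A_kA_k f + B_kB_k f) = ν Δf` with `ν = ½ Σ_{k∈S} λ(|k|)² (k₁² + k₂²)`. -/
theorem sum_AkAk_BkBk_eq_laplacian (m : ℕ) (hm : 1 ≤ m) (lam : ℕ → ℝ)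
    (S : Finset (ℤ × ℤ))
    (hrep : ∀ k : ℤ × ℤ, k ≠ 0 → k.1.natAbs + k.2.natAbs ≤ m → (k ∈ S ↔ ¬ (-k ∈ S)))
    (hmem : ∀ k ∈ S, k ≠ (0 : ℤ × ℤ) ∧ k.1.natAbs + k.2.natAbs ≤ m)
    (f : ℝ → ℝ → ℝ) (hf : ContDiff ℝ 2 (fun p : ℝ × ℝ => f p.1 p.2)) (x y : ℝ) :
    ∑ k ∈ S, (Aop k (lam (k.1.natAbs + k.2.natAbs))
          (Aop k (lam (k.1.natAbs + k.2.natAbs)) f) x y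
        + Bop k (lam (k.1.natAbs + k.2.natAbs))
          (Bop k (lam (k.1.natAbs + k.2.natAbs)) f) x y) =
      ((1 : ℝ)/2 * ∑ k ∈ S, (lam (k.1.natAbs + k.2.natAbs)) ^ 2 * ((k.1 : ℝ) ^ 2 + (k.2 : ℝ) ^ 2))
        * (p1 (p1 f) x y + p2 (p2 f) x y) :=
  sum_AkAk_BkBk_eq_laplacian_general m lam S hrep hmem f hf x y
end
end

section
/- Let 𝔤 be a metric Lie algebra (inner product ⟨,⟩) with Levi-Civita-type product ∇ given by the Koszul formula, and suppose vectors H_i ∈ 𝔤 satisfy ∇_{H_i}H_i = 0, and {H_i} is an orthonormal basis. Define K by ⟨K(u),v⟩ = −½⟨u, Σ_i(∇_{ad_v H_i}H_i + ∇_{H_i}(ad_v H_i))⟩ with ad_v w = −[v,w]. Then K(u) = −½(Σ_i ∇_{H_i}∇_{H_i} u + Ric(u)), where Ric(u) = Σ_i R(u,H_i)H_i and R(X,Y)Z = ∇_X∇_YZ − ∇_Y∇_XZ − ∇_{[X,Y]}Z. -/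
open scoped RealInnerProductSpace

/-- Let `𝔤` be a metric Lie algebra with Levi-Civita-type product `∇` (torsion-free and
skew-adjoint), `{H_i}` an orthonormal basis with `∇_{H_i}H_i = 0`, and `K` defined by
`⟨K(u),v⟩ = −½⟨u, Σᵢ(∇_{ad_v H_i}H_i + ∇_{H_i}(ad_v H_i))⟩` with `ad_v w = −[v,w]`.
Then `K(u) = −½(Σᵢ ∇_{H_i}∇_{H_i} u + Ric(u))`, where `Ric(u) = Σᵢ R(u,H_i)H_i` and
`R(X,Y)Z = ∇_X∇_YZ − ∇_Y∇_XZ − ∇_{[X,Y]}Z`. -/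
theorem K_eq_hodge_laplacian
    {V : Type*} [NormedAddCommGroup V] [InnerProductSpace ℝ V] [FiniteDimensional ℝ V]
    (n : ℕ) (br nabla : V →ₗ[ℝ] V →ₗ[ℝ] V)
    (htorsion : ∀ X Y : V, nabla X Y - nabla Y X = br X Y)
    (hmetric : ∀ X Y Z : V, ⟪nabla X Y, Z⟫ = -⟪Y, nabla X Z⟫)
    (R : V → V → V → V)
    (hR : ∀ X Y Z : V,
      R X Y Z = nabla X (nabla Y Z) - nabla Y (nabla X Z) - nabla (br X Y) Z)
    (hRsym : ∀ u v H : V, ⟪R v H H, u⟫ = ⟪R u H H, v⟫)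
    (b : OrthonormalBasis (Fin n) ℝ V)
    (hHi : ∀ i, nabla (b i) (b i) = 0)
    (K : V → V)
    (hK : ∀ u v : V,
      ⟪K u, v⟫ = -(1/2 : ℝ) *
        ⟪u, ∑ i : Fin n, (nabla (-(br v (b i))) (b i) + nabla (b i) (-(br v (b i))))⟫) :
    ∀ u : V, K u = -(1/2 : ℝ) •
      (∑ i : Fin n, nabla (b i) (nabla (b i) u) + ∑ i : Fin n, R u (b i) (b i)) := by
  intro u
  apply ext_inner_right ℝ
  intro v
  have key : ∀ H : V, nabla H H = 0 →
      ⟪u, nabla (-(br v H)) H + nabla H (-(br v H))⟫ =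
      ⟪nabla H (nabla H u) + R u H H, v⟫ := by
    intro H hH
    have hbr : br v H = nabla v H - nabla H v := (htorsion v H).symm
    have hRv : R v H H = -nabla H (nabla v H) - nabla (nabla v H) H + nabla (nabla H v) H := by
      rw [hR v H H, hbr, hH, map_zero, map_sub, LinearMap.sub_apply]
      abel
    -- step 2: LHS = ⟪R v H H, u⟫ + ⟪u, nabla H (nabla H v)⟫
    have h2 : ⟪u, nabla (-(br v H)) H + nabla H (-(br v H))⟫ =
        ⟪R v H H, u⟫ + ⟪u, nabla H (nabla H v)⟫ := by
      rw [hbr, hRv]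
      simp only [map_neg, map_sub, LinearMap.neg_apply, LinearMap.sub_apply,
        inner_add_right, inner_neg_right, inner_sub_right, inner_add_left,
        inner_neg_left, inner_sub_left]
      rw [real_inner_comm (nabla H (nabla v H)) u,
        real_inner_comm (nabla (nabla v H) H) u,
        real_inner_comm (nabla (nabla H v) H) u]
      ring
    -- step 3
    have h3 : ⟪u, nabla H (nabla H v)⟫ = ⟪nabla H (nabla H u), v⟫ := by
      have e0 := real_inner_comm u (nabla H (nabla H v))
      have e1 := hmetric H (nabla H v) u
      have e2 := hmetric H (nabla H u) v
      have e3 := real_inner_comm (nabla H v) (nabla H u)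
      linarith
    rw [h2, h3, inner_add_left, hRsym u v H]
    ring
  rw [hK u v, real_inner_smul_left, inner_sum, inner_add_left, sum_inner, sum_inner]
  congr 1
  rw [← Finset.sum_add_distrib]
  refine Finset.sum_congr rfl fun i _ => ?_
  rw [key (b i) (hHi i), inner_add_left]
end
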